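/- The Gaussian curvature K(x,y) = −[(x²+y²+1)/(8 f(x,y))] · 256(x²+y²)/[5+5x⁴−6y²+5y⁴+2x²(3+5y²)]² of the reduced Jacobi–Maupertuis metric on the parallelogram shape sphere is strictly negative at every (x,y) ≠ (0,0) away from the four singular points, and zero at (0,0). -/
import Mathlib


/-- The shape potential factor in stereographic coordinates. -/
noncomputable def fP (x y : ℝ) : ℝ :=
  2 / ((x + 1) ^ 2 + y ^ 2) + 2 / ((x - 1) ^ 2 + y ^ 2) +
    1 / (2 * (x ^ 2 + (y + 1) ^ 2)) + 1 / (2 * (x ^ 2 + (y - 1) ^ 2))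

/-- The Gaussian curvature of the reduced Jacobi–Maupertuis metric on the parallelogram
shape sphere in stereographic coordinates. -/
noncomputable def KP (x y : ℝ) : ℝ :=
  -((x ^ 2 + y ^ 2 + 1) / (8 * fP x y)) *
    (256 * (x ^ 2 + y ^ 2) /
      (5 + 5 * x ^ 4 - 6 * y ^ 2 + 5 * y ^ 4 + 2 * x ^ 2 * (3 + 5 * y ^ 2)) ^ 2)

/-- The four singular points (binary and simultaneous binary collisions). -/
def singPts : Set (ℝ × ℝ) := {(1, 0), (-1, 0), (0, 1), (0, -1)}

theorem curvature_neg_except_squares :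
    (∀ x y : ℝ, (x, y) ∉ singPts → (x, y) ≠ (0, 0) → KP x y < 0) ∧ KP 0 0 = 0 := by
  constructor
  · intro x y hs hne
    simp only [singPts, Set.mem_insert_iff, Set.mem_singleton_iff, Prod.mk.injEq, not_or,
      not_and] at hs
    obtain ⟨hA, hB, hC, hD⟩ := hs
    have h1 : 0 < (x + 1) ^ 2 + y ^ 2 := by
      rcases lt_or_eq_of_le (by positivity : (0:ℝ) ≤ (x + 1) ^ 2 + y ^ 2) with h | h
      · exact h
      · exfalso
        have hx : x = -1 := by nlinarith [sq_nonneg (x + 1), sq_nonneg y]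
        have hy : y = 0 := by nlinarith [sq_nonneg (x + 1), sq_nonneg y]
        exact hB hx hy
    have h2 : 0 < (x - 1) ^ 2 + y ^ 2 := by
      rcases lt_or_eq_of_le (by positivity : (0:ℝ) ≤ (x - 1) ^ 2 + y ^ 2) with h | h
      · exact h
      · exfalso
        have hx : x = 1 := by nlinarith [sq_nonneg (x - 1), sq_nonneg y]
        have hy : y = 0 := by nlinarith [sq_nonneg (x - 1), sq_nonneg y]
        exact hA hx hy
    have h3 : 0 < x ^ 2 + (y + 1) ^ 2 := by
      rcases lt_or_eq_of_le (by positivity : (0:ℝ) ≤ x ^ 2 + (y + 1) ^ 2) with h | h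
      · exact h
      · exfalso
        have hx : x = 0 := by nlinarith [sq_nonneg (y + 1), sq_nonneg x]
        have hy : y = -1 := by nlinarith [sq_nonneg (y + 1), sq_nonneg x]
        exact hD hx hy
    have h4 : 0 < x ^ 2 + (y - 1) ^ 2 := by
      rcases lt_or_eq_of_le (by positivity : (0:ℝ) ≤ x ^ 2 + (y - 1) ^ 2) with h | h
      · exact h
      · exfalso
        have hx : x = 0 := by nlinarith [sq_nonneg (y - 1), sq_nonneg x]
        have hy : y = 1 := by nlinarith [sq_nonneg (y - 1), sq_nonneg x]
        exact hC hx hy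
    have hf : 0 < fP x y := by
      unfold fP
      have t1 : 0 < 2 / ((x + 1) ^ 2 + y ^ 2) := by positivity
      have t2 : 0 < 2 / ((x - 1) ^ 2 + y ^ 2) := by positivity
      have t3 : 0 < 1 / (2 * (x ^ 2 + (y + 1) ^ 2)) := by positivity
      have t4 : 0 < 1 / (2 * (x ^ 2 + (y - 1) ^ 2)) := by positivity
      linarith
    have hxy : 0 < x ^ 2 + y ^ 2 := by
      rcases lt_or_eq_of_le (by positivity : (0:ℝ) ≤ x ^ 2 + y ^ 2) with h | h
      · exact h
      · exfalso
        apply hne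
        have hx : x = 0 := by nlinarith [sq_nonneg x, sq_nonneg y]
        have hy : y = 0 := by nlinarith [sq_nonneg x, sq_nonneg y]
        simp [hx, hy]
    have hden : 0 < 5 + 5 * x ^ 4 - 6 * y ^ 2 + 5 * y ^ 4 + 2 * x ^ 2 * (3 + 5 * y ^ 2) := by
      nlinarith [sq_nonneg (5 * y ^ 2 - 3), sq_nonneg x, sq_nonneg (x ^ 2), sq_nonneg (x * y)]
    have hpos : 0 < (x ^ 2 + y ^ 2 + 1) / (8 * fP x y) *
        (256 * (x ^ 2 + y ^ 2) /
          (5 + 5 * x ^ 4 - 6 * y ^ 2 + 5 * y ^ 4 + 2 * x ^ 2 * (3 + 5 * y ^ 2)) ^ 2) := by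
      apply mul_pos
      · apply div_pos (by positivity) (by positivity)
      · apply div_pos (by positivity) (by positivity)
    unfold KP
    linarith
  · unfold KP fP
    norm_num
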